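/- arXiv:1201.6397 — 4 statements merged into one kernel-verified Lean document; each statement's English description precedes it below -/
import Mathlib

section
/- Let F_q be a finite field, let m ≥ 1 and let 1 ≤ s ≤ l be integers. Let τ_1, …, τ_s be nonnegative integers and set τ = min{(l−j+1)τ_j + (l−j) : j = 1,…,s}. If e = (e_1, …, e_l) with each block e_i ∈ F_q^m satisfies wt(e_1) + ⋯ + wt(e_l) ≤ τ, then there exist pairwise distinct indices i_1, …, i_s ∈ {1, …, l} such that wt(e_{i_j}) ≤ τ_j for every j ∈ {1, …, s}. -/
/-!
Index from 0. If fewer than `j + 1` blocks had weight at most `τ_j`, the remaining `l − j` blocks would each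
have weight at least `τ_j + 1`, for a total exceeding `(l − j) τ_j + (l − j − 1) ≥ τ`. So the
`j`-th candidate set `{i | wt(e_i) ≤ τ_j}` has at least `j + 1` elements, and Hall's marriage
theorem picks distinct representatives: any `k` of these sets contain one with index
`≥ k − 1`, hence at least `k` elements.
-/

open Finset

section Counting

variable {ι : Type*} [Fintype ι]

theorem card_sub_mul_succ_le_sum_of_card_filter_le (w : ι → ℕ) {t k : ℕ}
    (h : #{i | w i ≤ t} ≤ k) : (Fintype.card ι - k) * (t + 1) ≤ ∑ i, w i := by
  have hlarge : Fintype.card ι - k ≤ #{i | ¬ w i ≤ t} := by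
    have := card_filter_add_card_filter_not (s := univ) (fun i => w i ≤ t)
    rw [card_univ] at this
    omega
  calc (Fintype.card ι - k) * (t + 1)
      ≤ #{i | ¬ w i ≤ t} * (t + 1) := Nat.mul_le_mul_right _ hlarge
    _ ≤ ∑ i ∈ {i | ¬ w i ≤ t}, w i := by
        simpa using card_nsmul_le_sum _ w (t + 1) fun i hi => by
          simpa using (mem_filter.mp hi).2
    _ ≤ ∑ i, w i := sum_le_sum_of_subset (filter_subset _ _)

theorem lt_card_filter_le_of_sum_le (w : ι → ℕ) {t k : ℕ} (hk : k < Fintype.card ι)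
    (hsum : ∑ i, w i ≤ (Fintype.card ι - k) * t + (Fintype.card ι - k - 1)) :
    k < #{i | w i ≤ t} := by
  by_contra! h
  have := card_sub_mul_succ_le_sum_of_card_filter_le w h
  rw [Nat.mul_succ] at this
  omega

end Counting

theorem exists_injective_mem_of_val_lt_card {α : Type*} [DecidableEq α] {s : ℕ}
    (t : Fin s → Finset α) (ht : ∀ j, j.1 < #(t j)) :
    ∃ f : Fin s → α, Function.Injective f ∧ ∀ j, f j ∈ t j := by
  refine (all_card_le_biUnion_card_iff_exists_injective t).mp fun A => ?_
  rcases A.eq_empty_or_nonempty with rfl | hA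
  · simp
  obtain ⟨jmax, hjmax, hmax⟩ := A.exists_max_image id hA
  calc #A ≤ #(Iic jmax) := card_le_card fun j hj => mem_Iic.mpr (hmax j hj)
    _ = jmax.1 + 1 := Fin.card_Iic jmax
    _ ≤ #(t jmax) := ht jmax
    _ ≤ #(A.biUnion t) := card_le_card (subset_biUnion_of_mem t hjmax)

theorem statement0_general (F : Type*) [Field F] [DecidableEq F]
    (m s l : ℕ) (hs : 1 ≤ s) (hsl : s ≤ l)
    (τj : Fin s → ℕ) (τ : ℕ)
    (hτ : τ = Finset.univ.inf' ⟨⟨0, hs⟩, Finset.mem_univ _⟩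
      (fun j : Fin s => (l - j.1) * τj j + (l - j.1 - 1)))
    (e : Fin l → Fin m → F)
    (he : ∑ i, hammingNorm (e i) ≤ τ) :
    ∃ idx : Fin s → Fin l, Function.Injective idx ∧
      ∀ j : Fin s, hammingNorm (e (idx j)) ≤ τj j := by
  have hcandidates : ∀ j : Fin s, j.1 < #{i | hammingNorm (e i) ≤ τj j} := fun j => by
    refine lt_card_filter_le_of_sum_le _ (by simpa using j.2.trans_le hsl) ?_
    have hτ_le : τ ≤ (l - j.1) * τj j + (l - j.1 - 1) := hτ ▸ inf'_le _ (mem_univ j)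
    simpa using he.trans hτ_le
  obtain ⟨idx, hinj, hmem⟩ := exists_injective_mem_of_val_lt_card _ hcandidates
  exact ⟨idx, hinj, fun j => (mem_filter.mp (hmem j)).2⟩

/-- If the total Hamming weight of the `l` blocks of `e` is at most
`τ = min { (l−j+1)·τ_j + (l−j) : j = 1,…,s }` (written 0-based below), then there are
pairwise distinct block indices `i_1,…,i_s` with `wt(e_{i_j}) ≤ τ_j` for all `j`. -/
theorem statement0 (F : Type*) [Field F] [Fintype F] [DecidableEq F]
    (m s l : ℕ) (hm : 1 ≤ m) (hs : 1 ≤ s) (hsl : s ≤ l)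
    (τj : Fin s → ℕ) (τ : ℕ)
    (hτ : τ = Finset.univ.inf' ⟨⟨0, hs⟩, Finset.mem_univ _⟩
      (fun j : Fin s => (l - j.1) * τj j + (l - j.1 - 1)))
    (e : Fin l → Fin m → F)
    (he : ∑ i, hammingNorm (e i) ≤ τ) :
    ∃ idx : Fin s → Fin l, Function.Injective idx ∧
      ∀ j : Fin s, hammingNorm (e (idx j)) ≤ τj j :=
  statement0_general F m s l hs hsl τj τ hτ e he
end

section
/- Let F_q be a finite field and let A ∈ F_q^{s×l} (s ≤ l) be non-singular by columns. Fix pairwise distinct indices i_1,…,i_s ∈ {1,…,l} and let A^{(1)} = A, A^{(2)}, …, A^{(s)} be the matrices produced by the elimination recursion with respect to i_1,…,i_s. Then for every k ∈ {1,…,s} the pivot entry a^{(k)}_{k,i_k} is non-zero; in particular all divisions in the recursion are well defined and the recursion can be carried out for all k = 2,…,s. -/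
/-- `A` is non-singular by columns: for every `1 ≤ t ≤ s` and every choice of columns
`j_1 < ⋯ < j_t`, the `t×t` submatrix of the first `t` rows and those columns is
non-singular.  (For `t = 0` the condition holds trivially.) -/
def nonsingularByColumns {F : Type*} [Field F] {s l : ℕ}
    (A : Matrix (Fin s) (Fin l) F) : Prop :=
  ∀ (t : ℕ) (ht : t ≤ s) (j : Fin t → Fin l), StrictMono j →
    (Matrix.of fun r c : Fin t => A (Fin.castLE ht r) (j c)).det ≠ 0

/-- The elimination recursion with respect to the pairwise distinct column indices
`idx 0, …, idx (s-1)` (0-based; `elimSeq A idx (k-1)` is the matrix `A^{(k)}` of the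
paper).  At step `k+1`, every column `i ∉ {idx 0, …, idx k}` of `A^{(k+1)}` is replaced by
`column i − (a^{(k+1)}_{k,i} / a^{(k+1)}_{k, idx k}) · column (idx k)` (0-based row `k`,
i.e. row `k+1` of the paper), the remaining columns being unchanged. -/
def elimSeq {F : Type*} [Field F] {s l : ℕ} (A : Matrix (Fin s) (Fin l) F)
    (idx : Fin s → Fin l) : ℕ → Matrix (Fin s) (Fin l) F
  | 0 => A
  | (k + 1) =>
      if hk : k < s then
        let B := elimSeq A idx k
        Matrix.of fun r i =>
          if ∃ j : Fin s, j.1 ≤ k ∧ idx j = i then B r i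
          else B r i - B ⟨k, hk⟩ i / B ⟨k, hk⟩ (idx ⟨k, hk⟩) * B r (idx ⟨k, hk⟩)
      else elimSeq A idx k

section Aux

variable {F : Type*} [Field F] {s l : ℕ} (A : Matrix (Fin s) (Fin l) F) (idx : Fin s → Fin l)

lemma elimSeq_succ_apply (k : ℕ) (hk : k < s) (r : Fin s) (i : Fin l) :
    elimSeq A idx (k + 1) r i =
      if ∃ j : Fin s, j.1 ≤ k ∧ idx j = i then elimSeq A idx k r i
      else elimSeq A idx k r i -
        elimSeq A idx k ⟨k, hk⟩ i / elimSeq A idx k ⟨k, hk⟩ (idx ⟨k, hk⟩) *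
          elimSeq A idx k r (idx ⟨k, hk⟩) := by
  simp only [elimSeq, dif_pos hk, Matrix.of_apply]

/-- If the zero-pattern invariant holds at step `k`, then the `k`-th pivot is nonzero. -/
lemma pivot_ne_zero (hA : nonsingularByColumns A) (hinj : Function.Injective idx)
    (k : ℕ) (hk : k < s)
    (hz : ∀ r : Fin s, r.1 < k → ∀ i : Fin l,
      (∀ j : Fin s, j.1 < k → idx j ≠ i) → elimSeq A idx k r i = 0) :
    elimSeq A idx k ⟨k, hk⟩ (idx ⟨k, hk⟩) ≠ 0 := by
  have hks : k + 1 ≤ s := hk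
  set S : ℕ → Matrix (Fin (k + 1)) (Fin (k + 1)) F := fun m =>
    Matrix.of fun r c => elimSeq A idx m (Fin.castLE hks r) (idx (Fin.castLE hks c)) with hS
  -- determinant preservation along the elimination
  have detS : ∀ m : ℕ, m ≤ k → (S m).det = (S 0).det := by
    intro m hm
    induction m with
    | zero => rfl
    | succ m ih =>
      have hmk : m < k := hm
      have hms : m < s := lt_trans hmk hk
      set m' : Fin (k + 1) := ⟨m, by omega⟩ with hm'
      set w : Fin (k + 1) → F := fun q =>
        elimSeq A idx m ⟨m, hms⟩ (idx (Fin.castLE hks q)) /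
          elimSeq A idx m ⟨m, hms⟩ (idx ⟨m, hms⟩) with hw
      set E : Matrix (Fin (k + 1)) (Fin (k + 1)) F :=
        (1 : Matrix (Fin (k + 1)) (Fin (k + 1)) F) -
          Matrix.of (fun p q => if p = m' ∧ m < q.1 then w q else 0) with hE
      have hcast : Fin.castLE hks m' = ⟨m, hms⟩ := rfl
      have hSE : S (m + 1) = S m * E := by
        ext r c
        have hsum : (S m * E) r c =
            S m r c - (if m < c.1 then S m r m' * w c else 0) := by
          simp only [Matrix.mul_apply, hE, Matrix.sub_apply, Matrix.one_apply,
            Matrix.of_apply, mul_sub, Finset.sum_sub_distrib, mul_ite, mul_zero, mul_one,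
            ite_and]
          congr 1
          · simp [Finset.sum_ite_eq']
          · by_cases hc : m < c.1
            · simp [hc, Finset.sum_ite_eq']
            · simp [hc]
        rw [hsum]
        show elimSeq A idx (m + 1) (Fin.castLE hks r) (idx (Fin.castLE hks c)) = _
        rw [elimSeq_succ_apply A idx m hms]
        by_cases hc : c.1 ≤ m
        · rw [if_pos ⟨Fin.castLE hks c, hc, rfl⟩, if_neg (by omega)]
          simp [hS]
        · rw [if_neg, if_pos (by omega)]
          · simp only [hS, Matrix.of_apply, hw, hcast]
            ring
          · rintro ⟨j, hj1, hj2⟩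
            have h2 : (j : ℕ) = (c : ℕ) := congrArg Fin.val (hinj hj2)
            omega
      have hEdet : E.det = 1 := by
        have htri : E.BlockTriangular id := by
          intro p q hpq
          simp only [hE, Matrix.sub_apply, Matrix.one_apply, Matrix.of_apply]
          rw [if_neg (by rintro rfl; exact absurd hpq (lt_irrefl _)),
            if_neg (by rintro ⟨rfl, h⟩; exact absurd h (not_lt.2 (le_of_lt hpq)))]
          ring
        rw [Matrix.det_of_upperTriangular htri]
        apply Finset.prod_eq_one
        intro p _
        simp only [hE, Matrix.sub_apply, Matrix.one_apply_eq, Matrix.of_apply]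
        rw [if_neg (by rintro ⟨rfl, h⟩; exact lt_irrefl m h)]
        ring
      rw [hSE, Matrix.det_mul, hEdet, mul_one, ih (le_of_lt hmk)]
  -- the initial determinant is nonzero
  have hJinj : Function.Injective fun c : Fin (k + 1) => idx (Fin.castLE hks c) := by
    intro a b hab
    have h2 := congrArg Fin.val (hinj hab)
    exact Fin.ext (by simpa using h2)
  have hdet0 : (S 0).det ≠ 0 := by
    set J : Fin (k + 1) → Fin l := fun c => idx (Fin.castLE hks c) with hJ
    set σ : Equiv.Perm (Fin (k + 1)) := Tuple.sort J with hσ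
    have hsm : StrictMono (J ∘ σ) :=
      (Tuple.monotone_sort J).strictMono_of_injective (hJinj.comp σ.injective)
    have hd := hA (k + 1) hks (J ∘ σ) hsm
    have heq : (Matrix.of fun r c : Fin (k + 1) => A (Fin.castLE hks r) ((J ∘ σ) c)) =
        (S 0).submatrix id σ := by
      ext r c
      rfl
    rw [heq, Matrix.det_permute'] at hd
    intro h0
    rw [h0, mul_zero] at hd
    exact hd rfl
  -- conclude
  intro hp
  have hcol : ∀ r : Fin (k + 1), S k r (Fin.last k) = 0 := by
    intro r
    have hlast : Fin.castLE hks (Fin.last k) = (⟨k, hk⟩ : Fin s) := rfl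
    show elimSeq A idx k (Fin.castLE hks r) (idx (Fin.castLE hks (Fin.last k))) = 0
    rw [hlast]
    rcases lt_or_eq_of_le (Nat.lt_succ_iff.mp r.isLt) with hr | hr
    · refine hz _ hr _ ?_
      intro j hj hje
      have h2 : (j : ℕ) = k := congrArg Fin.val (hinj hje)
      omega
    · have : Fin.castLE hks r = (⟨k, hk⟩ : Fin s) := Fin.ext hr
      rw [this]
      exact hp
  have : (S k).det = 0 := Matrix.det_eq_zero_of_column_eq_zero (Fin.last k) hcol
  rw [detS k le_rfl] at this
  exact hdet0 this

end Aux

/-- If `A` is non-singular by columns, then every pivot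
`a^{(k)}_{k,i_k}` appearing in the elimination recursion is non-zero (so all divisions
are well defined).  In 0-based form: `(elimSeq A idx k.1) k (idx k) ≠ 0` for all `k`. -/
theorem statement3 (F : Type*) [Field F] [Fintype F] (s l : ℕ) (hsl : s ≤ l)
    (A : Matrix (Fin s) (Fin l) F) (hA : nonsingularByColumns A)
    (idx : Fin s → Fin l) (hinj : Function.Injective idx) :
    ∀ k : Fin s, elimSeq A idx k.1 k (idx k) ≠ 0 := by
  suffices H : ∀ k : ℕ, k ≤ s →
      (∀ r : Fin s, r.1 < k → ∀ i : Fin l,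
        (∀ j : Fin s, j.1 < k → idx j ≠ i) → elimSeq A idx k r i = 0) ∧
      ∀ hk : k < s, elimSeq A idx k ⟨k, hk⟩ (idx ⟨k, hk⟩) ≠ 0 by
    intro k
    have h := (H k.1 (le_of_lt k.isLt)).2 k.isLt
    simpa using h
  intro k
  induction k with
  | zero =>
    intro _
    refine ⟨fun r hr => absurd hr (by omega), fun hk => ?_⟩
    exact pivot_ne_zero A idx hA hinj 0 hk (fun r hr => absurd hr (by omega))
  | succ k ih =>
    intro hk1
    have hk : k < s := hk1
    obtain ⟨ihz, ihp⟩ := ih (le_of_lt hk)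
    have hp := ihp hk
    have hz : ∀ r : Fin s, r.1 < k + 1 → ∀ i : Fin l,
        (∀ j : Fin s, j.1 < k + 1 → idx j ≠ i) → elimSeq A idx (k + 1) r i = 0 := by
      intro r hr i hi
      rw [elimSeq_succ_apply A idx k hk, if_neg]
      · rcases lt_or_eq_of_le (Nat.lt_succ_iff.mp hr) with hrk | hrk
        · rw [ihz r hrk i (fun j hj => hi j (by omega)),
            ihz r hrk (idx ⟨k, hk⟩) (fun j hj hje => by
              have h2 : (j : ℕ) = k := congrArg Fin.val (hinj hje); omega)]
          ring
        · have : r = (⟨k, hk⟩ : Fin s) := Fin.ext hrk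
          subst this
          rw [div_mul_cancel₀ _ hp]
          ring
      · rintro ⟨j, hj1, hj2⟩
        exact hi j (by omega) hj2
    exact ⟨hz, fun hk1' => pivot_ne_zero A idx hA hinj (k + 1) hk1' hz⟩
end

section
/- Let F_q be a finite field, let C_1 ⊇ C_2 ⊇ ⋯ ⊇ C_s be nested non-zero linear codes in F_q^m with minimum distances d_1, …, d_s, and let A ∈ F_q^{s×l} (s ≤ l) be non-singular by columns. Then the minimum distance of the matrix-product code C = [C_1 ⋯ C_s]·A equals min{l·d_1, (l−1)·d_2, …, (l−s+1)·d_s}. -/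
/-- The matrix-product code `[C_1 ⋯ C_s]·A`: all vectors
`(Σ_j a_{j,1} c_j, …, Σ_j a_{j,l} c_j)` with `c_j ∈ C_j`, viewed as `l` blocks of
length `m`. -/
def matrixProductCode {F : Type*} [Field F] {m s l : ℕ}
    (C : Fin s → Submodule F (Fin m → F)) (A : Matrix (Fin s) (Fin l) F) :
    Set (Fin l → Fin m → F) :=
  { v | ∃ c : Fin s → (Fin m → F), (∀ j, c j ∈ C j) ∧ v = fun i => ∑ j, A j i • c j }

/-!
Write a codeword as `v_i = Σ_j a_{j,i} c_j` and let `t` be the last index with `c_t ≠ 0`.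
In a coordinate `p` where `c_t` is non-zero, `(v_i p)_i` is a combination of the first `t + 1`
rows of `A` with non-zero coefficient on row `t`; it vanishes in at most `t` columns, since
`t + 1` of them would carry a singular `(t+1)×(t+1)` minor. Hence `wt v ≥ (l - t)·wt c_t ≥
(l - t)·d_t`.

Conversely, for the index `t` attaining the minimum, counting dimensions gives a non-zero
combination `w` of the first `t + 1` rows vanishing on the first `t` columns; by the bound above it
vanishes nowhere else. Taking `c_j = w_j x` for a minimum-weight word `x ∈ C_t ⊆ C_j` (`j ≤ t`)
gives the codeword `v_i = (wA)_i x` of weight exactly `(l - t)·d_t`.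
-/

open Matrix Finset

theorem Fin.sum_castLE_eq_sum_of_forall_gt_eq_zero {M : Type*} [AddCommMonoid M] {s : ℕ}
    (f : Fin s → M) (t : Fin s) (hf : ∀ j, t < j → f j = 0) :
    ∑ r : Fin (t + 1), f (Fin.castLE t.isLt r) = ∑ j, f j := by
  have hlast : Fin.castLE t.isLt (Fin.last t) = t := Fin.ext rfl
  rw [← Finset.Iic_top, Fin.top_eq_last, ← Fin.sum_Iic_castLE, hlast]
  refine Finset.sum_subset (Finset.subset_univ _) fun j _ hj => hf j ?_
  simpa using hj

theorem exists_ne_zero_and_forall_gt_eq_zero {ι M : Type*} [Fintype ι] [LinearOrder ι] [Zero M]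
    {f : ι → M} (hf : f ≠ 0) : ∃ t, f t ≠ 0 ∧ ∀ j, t < j → f j = 0 := by
  classical
  obtain ⟨t, ht, hmax⟩ := (univ.filter fun j => f j ≠ 0).exists_max_image id
    (by simpa [Finset.filter_nonempty_iff, Function.ne_iff] using hf)
  refine ⟨t, (mem_filter.1 ht).2, fun j hj => ?_⟩
  by_contra h
  exact (hmax j (mem_filter.2 ⟨mem_univ j, h⟩)).not_gt hj

section NonsingularByColumns

variable {F : Type*} [Field F] [DecidableEq F] {s l : ℕ} {A : Matrix (Fin s) (Fin l) F}

theorem nonsingularByColumns.card_vecMul_eq_zero_le (hA : nonsingularByColumns A)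
    (w : Fin s → F) (t : Fin s) (hwt : w t ≠ 0) (hw : ∀ j, t < j → w j = 0) :
    #{i | (w ᵥ* A) i = 0} ≤ t := by
  by_contra! hcard
  set e := Finset.orderEmbOfCardLe _ hcard
  refine hA (t + 1) t.isLt e e.strictMono (Matrix.exists_vecMul_eq_zero_iff.1
    ⟨fun r => w (Fin.castLE t.isLt r), fun h => hwt (congrFun h (Fin.last t)), ?_⟩)
  funext c
  have hzero := (mem_filter.1 (Finset.orderEmbOfCardLe_mem _ hcard c)).2
  rw [Pi.zero_apply, ← hzero]
  exact Fin.sum_castLE_eq_sum_of_forall_gt_eq_zero (fun j => w j * A j (e c)) t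
    fun j hj => by rw [hw j hj, zero_mul]

theorem nonsingularByColumns.sub_le_card_vecMul_ne_zero (hA : nonsingularByColumns A)
    (w : Fin s → F) (t : Fin s) (hwt : w t ≠ 0) (hw : ∀ j, t < j → w j = 0) :
    l - t ≤ #{i | (w ᵥ* A) i ≠ 0} := by
  have := card_filter_add_card_filter_not (s := univ) fun i => (w ᵥ* A) i = 0
  have := hA.card_vecMul_eq_zero_le w t hwt hw
  simp only [card_univ, Fintype.card_fin, ne_eq] at *
  omega

theorem nonsingularByColumns.exists_card_vecMul_ne_zero_eq (hA : nonsingularByColumns A)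
    (hsl : s ≤ l) (i₀ : Fin s) :
    ∃ w : Fin s → F, (∀ j, i₀ < j → w j = 0) ∧ #{i | (w ᵥ* A) i ≠ 0} = l - i₀ := by
  have hl : (i₀ : ℕ) ≤ l := i₀.isLt.le.trans hsl
  obtain ⟨μ, hμ, hμ0⟩ := (Submodule.ne_bot_iff _).1 <| LinearMap.ker_ne_bot_of_finrank_lt
    (f := (A.submatrix (Fin.castLE i₀.isLt) (Fin.castLE hl)).vecMulLinear) (by simp)
  set w := Function.extend (Fin.castLE i₀.isLt) μ 0
  have hwμ : ∀ r, w (Fin.castLE i₀.isLt r) = μ r := (Fin.castLE_injective _).extend_apply μ 0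
  have hw : ∀ j, i₀ < j → w j = 0 := fun j hj => by
    refine Function.extend_apply' _ _ _ ?_
    rintro ⟨r, rfl⟩
    exact (Fin.lt_def.1 hj).not_ge (Nat.le_of_lt_succ r.isLt)
  obtain ⟨t, hwt, ht⟩ := exists_ne_zero_and_forall_gt_eq_zero (f := w)
    fun h => hμ0 (funext fun r => by rw [← hwμ, h, Pi.zero_apply, Pi.zero_apply])
  have hti : t ≤ i₀ := not_lt.1 fun h => hwt (hw t h)
  have hzero : ∀ c : Fin i₀, (w ᵥ* A) (Fin.castLE hl c) = 0 := fun c => by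
    rw [vecMul, dotProduct, ← Fin.sum_castLE_eq_sum_of_forall_gt_eq_zero _ i₀
      fun j hj => by rw [hw j hj, zero_mul]]
    simp only [hwμ]
    exact congrFun hμ c
  refine ⟨w, hw, le_antisymm ?_ ((Nat.sub_le_sub_left hti l).trans
    (hA.sub_le_card_vecMul_ne_zero w t hwt ht))⟩
  have hsub : univ.map (Fin.castLEEmb hl) ⊆ ({i | (w ᵥ* A) i = 0} : Finset (Fin l)) := by
    simpa [Finset.subset_iff] using hzero
  have := card_le_card hsub
  have := card_filter_add_card_filter_not (s := univ) fun i => (w ᵥ* A) i = 0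
  simp only [card_univ, Fintype.card_fin, card_map, ne_eq] at *
  omega

end NonsingularByColumns

theorem sum_hammingNorm_eq_sum_card {ι κ M : Type*} [Fintype ι] [Fintype κ] [Zero M]
    [DecidableEq M] (v : ι → κ → M) :
    ∑ i, hammingNorm (v i) = ∑ p, #{i | v i p ≠ 0} := by
  simp only [hammingNorm, card_filter]
  exact sum_comm

theorem sum_hammingNorm_smul {ι κ F : Type*} [Fintype ι] [Fintype κ] [Field F] [DecidableEq F]
    (u : ι → F) (x : κ → F) :
    ∑ i, hammingNorm (u i • x) = #{i | u i ≠ 0} * hammingNorm x := by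
  rw [card_filter, sum_mul]
  refine sum_congr rfl fun i _ => ?_
  split_ifs with hu
  · rw [one_mul, hammingNorm_smul fun _ => IsSMulRegular.of_ne_zero hu]
  · rw [zero_mul, not_not.1 hu, zero_smul, hammingNorm_zero]

section MatrixProductCode

variable {F : Type*} [Field F] {m s l : ℕ}
  {C : Fin s → Submodule F (Fin m → F)} {A : Matrix (Fin s) (Fin l) F}

theorem vecMul_smul_mem_matrixProductCode (hnested : ∀ i j : Fin s, i ≤ j → C j ≤ C i)
    {w : Fin s → F} {i₀ : Fin s} (hw : ∀ j, i₀ < j → w j = 0) {x : Fin m → F}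
    (hx : x ∈ C i₀) :
    (fun i => (w ᵥ* A) i • x) ∈ matrixProductCode C A := by
  refine ⟨fun j => w j • x, fun j => ?_, funext fun i => ?_⟩
  · rcases le_or_gt j i₀ with hj | hj
    · exact (C j).smul_mem _ (hnested j i₀ hj hx)
    · simpa only [hw j hj, zero_smul] using (C j).zero_mem
  · simp only [vecMul, dotProduct, sum_smul, smul_smul, mul_comm]

theorem exists_le_sum_hammingNorm_of_mem_matrixProductCode [DecidableEq F]
    (hA : nonsingularByColumns A) {d : Fin s → ℕ}
    (hd : ∀ j, ∀ x ∈ C j, x ≠ 0 → d j ≤ hammingNorm x) {v : Fin l → Fin m → F}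
    (hv : v ∈ matrixProductCode C A) (hv0 : v ≠ 0) :
    ∃ t : Fin s, (l - t) * d t ≤ ∑ i, hammingNorm (v i) := by
  obtain ⟨c, hcC, rfl⟩ := hv
  obtain ⟨t, hct, hc⟩ := exists_ne_zero_and_forall_gt_eq_zero (f := c) <| by
    rintro rfl
    exact hv0 (funext fun i => by simp)
  have hcoord (p : Fin m) (hp : c t p ≠ 0) : l - t ≤ #{i | (∑ j, A j i • c j) p ≠ 0} := by
    have hvp : ∀ i, (∑ j, A j i • c j) p = ((fun j => c j p) ᵥ* A) i := fun i => by
      simp [vecMul, dotProduct, mul_comm]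
    simp only [hvp]
    exact hA.sub_le_card_vecMul_ne_zero _ t hp fun j hj => by simp [hc j hj]
  refine ⟨t, ?_⟩
  rw [sum_hammingNorm_eq_sum_card]
  calc (l - t) * d t ≤ (l - t) * hammingNorm (c t) := Nat.mul_le_mul_left _ (hd t _ (hcC t) hct)
    _ = ∑ p with c t p ≠ 0, (l - t) := by rw [sum_const, smul_eq_mul, mul_comm]; rfl
    _ ≤ ∑ p with c t p ≠ 0, #{i | (∑ j, A j i • c j) p ≠ 0} :=
      sum_le_sum fun p hp => hcoord p (mem_filter.1 hp).2
    _ ≤ _ := sum_le_sum_of_subset (filter_subset _ _)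

theorem exists_mem_matrixProductCode_sum_hammingNorm_eq [DecidableEq F]
    (hA : nonsingularByColumns A) (hnested : ∀ i j : Fin s, i ≤ j → C j ≤ C i) (hsl : s ≤ l)
    {i₀ : Fin s} {x : Fin m → F} (hx : x ∈ C i₀) (hx0 : x ≠ 0) :
    ∃ v ∈ matrixProductCode C A, v ≠ 0 ∧ ∑ i, hammingNorm (v i) = (l - i₀) * hammingNorm x := by
  obtain ⟨w, hw, hcard⟩ := hA.exists_card_vecMul_ne_zero_eq hsl i₀
  have hweight : ∑ i, hammingNorm ((w ᵥ* A) i • x) = (l - i₀) * hammingNorm x := by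
    rw [sum_hammingNorm_smul, hcard]
  refine ⟨_, vecMul_smul_mem_matrixProductCode hnested hw hx, fun h0 => ?_, hweight⟩
  have hpos : 0 < (l - i₀) * hammingNorm x :=
    Nat.mul_pos (by omega) (hammingNorm_pos_iff.2 hx0)
  simp [← hweight, funext_iff.1 h0] at hpos

end MatrixProductCode

theorem statement9_general (F : Type*) [Field F] [DecidableEq F]
    (m s l : ℕ) (hs : 0 < s) (hsl : s ≤ l)
    (C : Fin s → Submodule F (Fin m → F))
    (hnested : ∀ i j : Fin s, i ≤ j → C j ≤ C i)
    (d : Fin s → ℕ)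
    (hd₁ : ∀ j, ∀ x ∈ C j, x ≠ 0 → d j ≤ hammingNorm x)
    (hd₂ : ∀ j, ∃ x ∈ C j, x ≠ 0 ∧ hammingNorm x = d j)
    (A : Matrix (Fin s) (Fin l) F) (hA : nonsingularByColumns A) :
    (∀ v ∈ matrixProductCode C A, v ≠ 0 →
      Finset.univ.inf' ⟨⟨0, hs⟩, Finset.mem_univ _⟩ (fun i : Fin s => (l - i.1) * d i)
        ≤ ∑ i, hammingNorm (v i)) ∧
    (∃ v ∈ matrixProductCode C A, v ≠ 0 ∧
      ∑ i, hammingNorm (v i)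
        = Finset.univ.inf' ⟨⟨0, hs⟩, Finset.mem_univ _⟩
            (fun i : Fin s => (l - i.1) * d i)) := by
  refine ⟨fun v hv hv0 => ?_, ?_⟩
  · obtain ⟨t, ht⟩ := exists_le_sum_hammingNorm_of_mem_matrixProductCode hA hd₁ hv hv0
    exact (inf'_le _ (mem_univ t)).trans ht
  · obtain ⟨i₀, -, hmin⟩ := exists_mem_eq_inf' ⟨⟨0, hs⟩, mem_univ _⟩
      fun i : Fin s => (l - i.1) * d i
    obtain ⟨x, hx, hx0, hxd⟩ := hd₂ i₀
    obtain ⟨v, hv, hv0, hweight⟩ :=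
      exists_mem_matrixProductCode_sum_hammingNorm_eq hA hnested hsl hx hx0
    exact ⟨v, hv, hv0, by rw [hweight, hxd, hmin]⟩

/-- If `C_1 ⊇ C_2 ⊇ ⋯ ⊇ C_s` are nested non-zero linear codes in
`F_q^m` with minimum distances `d_1,…,d_s` and `A` is non-singular by columns, then the
minimum distance of `[C_1 ⋯ C_s]·A` equals `min{l·d_1, (l−1)·d_2, …, (l−s+1)·d_s}`
(below, `i : Fin s` is 0-based, so `l − i.1 = l − i + 1` for the 1-based index `i`). -/
theorem statement9 (F : Type*) [Field F] [Fintype F] [DecidableEq F]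
    (m s l : ℕ) (hm : 1 ≤ m) (hs : 0 < s) (hsl : s ≤ l)
    (C : Fin s → Submodule F (Fin m → F)) (hC : ∀ j, C j ≠ ⊥)
    (hnested : ∀ i j : Fin s, i ≤ j → C j ≤ C i)
    (d : Fin s → ℕ)
    (hd₁ : ∀ j, ∀ x ∈ C j, x ≠ 0 → d j ≤ hammingNorm x)
    (hd₂ : ∀ j, ∃ x ∈ C j, x ≠ 0 ∧ hammingNorm x = d j)
    (A : Matrix (Fin s) (Fin l) F) (hA : nonsingularByColumns A) :
    (∀ v ∈ matrixProductCode C A, v ≠ 0 →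
      Finset.univ.inf' ⟨⟨0, hs⟩, Finset.mem_univ _⟩ (fun i : Fin s => (l - i.1) * d i)
        ≤ ∑ i, hammingNorm (v i)) ∧
    (∃ v ∈ matrixProductCode C A, v ≠ 0 ∧
      ∑ i, hammingNorm (v i)
        = Finset.univ.inf' ⟨⟨0, hs⟩, Finset.mem_univ _⟩
            (fun i : Fin s => (l - i.1) * d i)) :=
  statement9_general F m s l hs hsl C hnested d hd₁ hd₂ A hA
end

section
/- Let F_q be a finite field, m ≥ 1, and R = F_q[X]/(X^m − 1). Let C_1, …, C_s ⊆ R be cyclic codes of F_q-dimensions k_1, …, k_s, and let A ∈ R^{s×l} (s ≤ l) be unit by columns. Then the matrix-product code with polynomial units C = [C_1 ⋯ C_s]·A, viewed as an F_q-linear subspace of F_q^{ml} via the coefficient identification R ≅ F_q^m, has length ml and F_q-dimension k_1 + ⋯ + k_s. -/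
set_option synthInstance.maxHeartbeats 400000
set_option maxHeartbeats 800000

/-- The ring `R = F[X]/(X^m − 1)`. -/
abbrev Rq (F : Type*) [Field F] (m : ℕ) : Type _ :=
  Polynomial F ⧸ Ideal.span ({Polynomial.X ^ m - 1} : Set (Polynomial F))

/-- The matrix-product code with polynomial units `[C_1 ⋯ C_s]·A ⊆ R^l`, for cyclic
codes `C_j` (ideals of `R = F[X]/(X^m − 1)`) and `A ∈ R^{s×l}`: all tuples
`(Σ_j a_{j,1}·c_j, …, Σ_j a_{j,l}·c_j)` with `c_j ∈ C_j`, products taken in `R`. -/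
def mpcPolyUnits {F : Type*} [Field F] {m s l : ℕ}
    (C : Fin s → Ideal (Rq F m)) (A : Matrix (Fin s) (Fin l) (Rq F m)) :
    Set (Fin l → Rq F m) :=
  { v | ∃ c : Fin s → Rq F m, (∀ j, c j ∈ C j) ∧ v = fun i => ∑ j, A j i * c j }

/-- `A ∈ R^{s×l}` is unit by columns: for every `1 ≤ t ≤ s` and every choice of columns
`j_1 < ⋯ < j_t`, the determinant of the `t×t` submatrix of the first `t` rows and those
columns is a unit of `R`.  (For `t = 0` the condition holds trivially.) -/
def unitByColumns {F : Type*} [Field F] {m s l : ℕ}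
    (A : Matrix (Fin s) (Fin l) (Rq F m)) : Prop :=
  ∀ (t : ℕ) (ht : t ≤ s) (j : Fin t → Fin l), StrictMono j →
    IsUnit (Matrix.of fun r c : Fin t => A (Fin.castLE ht r) (j c)).det

/-- The `F`-linear equivalence between `Submodule.pi Set.univ p` and `Π i, p i`. -/
noncomputable def piSubmoduleEquiv {R : Type*} [CommRing R] {ι : Type*}
    {M : ι → Type*} [∀ i, AddCommGroup (M i)] [∀ i, Module R (M i)]
    (p : ∀ i, Submodule R (M i)) :
    (Submodule.pi Set.univ p) ≃ₗ[R] (∀ i, p i) where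
  toFun x := fun i => ⟨x.1 i, x.2 i trivial⟩
  map_add' x y := rfl
  map_smul' r x := rfl
  invFun y := ⟨fun i => (y i : M i), fun i _ => (y i).2⟩
  left_inv x := rfl
  right_inv y := rfl

/-- If the cyclic codes `C_j ⊆ R = F_q[X]/(X^m − 1)` have
`F_q`-dimensions `k_j` and `A ∈ R^{s×l}` (`s ≤ l`) is unit by columns, then the
matrix-product code with polynomial units `[C_1 ⋯ C_s]·A`, viewed as an `F_q`-linear
subspace of `R^l ≅ F_q^{ml}`, has length `m·l` and `F_q`-dimension `k_1 + ⋯ + k_s`. -/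
theorem statement11 (F : Type*) [Field F] [Fintype F] (m : ℕ) (hm : 1 ≤ m)
    (s l : ℕ) (hsl : s ≤ l)
    (C : Fin s → Ideal (Rq F m)) (k : Fin s → ℕ)
    (hk : ∀ j, Module.finrank F (Submodule.restrictScalars F (C j)) = k j)
    (A : Matrix (Fin s) (Fin l) (Rq F m)) (hA : unitByColumns A) :
    ∃ V : Submodule F (Fin l → Rq F m),
      (V : Set (Fin l → Rq F m)) = mpcPolyUnits C A ∧
      Module.finrank F (Fin l → Rq F m) = m * l ∧
      Module.finrank F V = ∑ j, k j := by
  classical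
  have hne : (Polynomial.X ^ m - 1 : Polynomial F) ≠ 0 := by
    have := Polynomial.X_pow_sub_C_ne_zero (R := F) hm 1
    rwa [Polynomial.C_1] at this
  have hdeg : (Polynomial.X ^ m - 1 : Polynomial F).natDegree = m := by
    have := Polynomial.natDegree_X_pow_sub_C (R := F) (n := m) (r := 1)
    rwa [Polynomial.C_1] at this
  let pb : PowerBasis F (AdjoinRoot (Polynomial.X ^ m - 1 : Polynomial F)) :=
    AdjoinRoot.powerBasis hne
  have hRfin : Module.Finite F (Rq F m) := Module.Finite.of_basis pb.basis
  have hRrank : Module.finrank F (Rq F m) = m := by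
    have h1 : Module.finrank F (AdjoinRoot (Polynomial.X ^ m - 1 : Polynomial F)) = m := by
      rw [PowerBasis.finrank pb, AdjoinRoot.powerBasis_dim hne, hdeg]
    exact h1
  -- the linear map
  let L : (Fin s → Rq F m) →ₗ[F] (Fin l → Rq F m) :=
    { toFun := fun c i => ∑ j, A j i * c j
      map_add' := by
        intro x y; funext i
        simp [mul_add, Finset.sum_add_distrib]
      map_smul' := by
        intro r x; funext i
        simp [Finset.smul_sum, mul_smul_comm] }
  -- injectivity of L
  have hLinj : Function.Injective L := by
    rw [← LinearMap.ker_eq_bot, LinearMap.ker_eq_bot']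
    intro c hc
    have hmono : StrictMono (Fin.castLE hsl) := fun a b hab => by
      rw [Fin.lt_def, Fin.coe_castLE, Fin.coe_castLE]; exact hab
    have hunit := hA s le_rfl (Fin.castLE hsl) hmono
    let B : Matrix (Fin s) (Fin s) (Rq F m) :=
      Matrix.of fun r c : Fin s => A c (Fin.castLE hsl r)
    have hdetB : IsUnit B.det := by
      have hEq : B = Matrix.transpose (Matrix.of fun r c : Fin s =>
          A (Fin.castLE le_rfl r) (Fin.castLE hsl c)) := by
        ext r c
        rfl
      rw [hEq, Matrix.det_transpose]
      exact hunit
    have hBinv : Invertible B := B.invertibleOfIsUnitDet hdetB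
    have hmv : B.mulVec c = 0 := by
      funext i
      have h2 := congrFun hc (Fin.castLE hsl i)
      simpa [Matrix.mulVec, dotProduct, B, L] using h2
    calc c = (1 : Matrix (Fin s) (Fin s) (Rq F m)).mulVec c := by simp
      _ = ((⅟ B) * B).mulVec c := by rw [invOf_mul_self]
      _ = (⅟ B).mulVec (B.mulVec c) := by rw [Matrix.mulVec_mulVec]
      _ = 0 := by rw [hmv]; simp
  -- the source submodule
  let W : Submodule F (Fin s → Rq F m) :=
    Submodule.pi Set.univ fun j => Submodule.restrictScalars F (C j)
  refine ⟨Submodule.map L W, ?_, ?_, ?_⟩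
  · ext v
    simp only [SetLike.mem_coe, Submodule.mem_map, mpcPolyUnits, Set.mem_setOf_eq]
    constructor
    · rintro ⟨c, hcW, rfl⟩
      exact ⟨c, fun j => hcW j trivial, rfl⟩
    · rintro ⟨c, hcC, rfl⟩
      exact ⟨c, fun j _ => hcC j, rfl⟩
  · rw [Module.finrank_pi_fintype]
    simp [hRrank, mul_comm]
  · have e1 : W ≃ₗ[F] Submodule.map L W := Submodule.equivMapOfInjective L hLinj W
    have e2 := piSubmoduleEquiv (fun j => Submodule.restrictScalars F (C j))
    rw [← e1.finrank_eq, e2.finrank_eq, Module.finrank_pi_fintype]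
    exact Finset.sum_congr rfl fun j _ => hk j
end
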